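/- The dimension of the space x ∧ [P_{n}(ℝ³)]³ = {x ∧ p : p ∈ [P_n(ℝ³)]³} equals 3·π_{n+1,3} - π_{n+2,3} + 1, i.e., 3·dim(P_{n+1}) - dim(P_{n+2}) + 1. -/

import Mathlib

/-!
Rank–nullity for `p ↦ x ∧ p` on `[P_n]³`. Its kernel consists of the fields `x q`: from
`x ∧ p = 0` we get `x₀ p₁ = x₁ p₀`, and the prime `x₀` does not divide `x₁`, so it divides `p₀`.
Inside `[P_n]³` these are the `x q` with `q ∈ P_{n-1}` (only `0` when `n = 0`), so the image has
dimension `3 π_n - π_{n-1}`. This equals `3 π_{n+1} - π_{n+2} + 1` because the third finite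
difference of `k ↦ binom(k, 3)` is `1`. Finally `dim P_m(ℝ^d) = binom(m + d, d)`: adding a slack
exponent identifies the monomials of degree `≤ m` in `d` variables with the multisets of size `m`
drawn from `d + 1` elements.
-/

open MvPolynomial

noncomputable section

abbrev Poly3 := MvPolynomial (Fin 3) ℝ

/-- The cross product `p ↦ x ∧ p` with the position vector, as a linear map:
`(x ∧ p)_i = x_{i+1} p_{i+2} - x_{i+2} p_{i+1}` (indices mod 3). -/
def xcrossL : (Fin 3 → Poly3) →ₗ[ℝ] (Fin 3 → Poly3) :=
  LinearMap.pi fun i : Fin 3 =>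
    LinearMap.mulLeft ℝ (X (i + 1)) ∘ₗ LinearMap.proj (i + 2)
      - LinearMap.mulLeft ℝ (X (i + 2)) ∘ₗ LinearMap.proj (i + 1)

/-- The space `[P_n(ℝ³)]³`. -/
def Vn (n : ℕ) : Submodule ℝ (Fin 3 → Poly3) :=
  Submodule.pi Set.univ fun _ => restrictTotalDegree (Fin 3) ℝ n

open Module

def sumLeEquivSumEqOption (σ : Type*) [Fintype σ] (m : ℕ) :
    {f : σ → ℕ // ∑ i, f i ≤ m} ≃ {g : Option σ → ℕ // ∑ i, g i = m} where
  toFun f := ⟨fun o => o.elim (m - ∑ i, f.1 i) f.1, by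
    have := f.2
    simp only [Fintype.sum_option, Option.elim_none, Option.elim_some]
    omega⟩
  invFun g := ⟨fun i => g.1 (some i), by
    have := g.2
    rw [Fintype.sum_option] at this
    exact Nat.le.intro ((add_comm _ _).trans this)⟩
  left_inv f := rfl
  right_inv g := by
    obtain ⟨g, hg⟩ := g
    rw [Fintype.sum_option] at hg
    ext (_ | i)
    · simp only [Option.elim_none]
      omega
    · rfl

theorem Finsupp.natCard_setOf_sum_le (σ : Type*) [Fintype σ] (m : ℕ) :
    Nat.card {s : σ →₀ ℕ | (s.sum fun _ e => e) ≤ m}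
      = (m + Fintype.card σ).choose (Fintype.card σ) := by
  classical
  calc Nat.card {s : σ →₀ ℕ | (s.sum fun _ e => e) ≤ m}
      = Nat.card (Sym (Option σ) m) :=
        Nat.card_congr <|
          (Finsupp.equivFunOnFinite.subtypeEquiv fun s => by simp [Finsupp.sum_fintype]).trans <|
            (sumLeEquivSumEqOption σ m).trans (Sym.equivNatSumOfFintype (Option σ) m).symm
    _ = (m + Fintype.card σ).choose (Fintype.card σ) := by
        rw [Nat.card_eq_fintype_card, Sym.card_sym_eq_choose, Fintype.card_option,
          show Fintype.card σ + 1 + m - 1 = m + Fintype.card σ by omega, Nat.choose_symm_add]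

theorem MvPolynomial.finrank_restrictTotalDegree (σ R : Type*) [Fintype σ] [CommRing R]
    [Nontrivial R] (m : ℕ) :
    finrank R (restrictTotalDegree σ R m) = (m + Fintype.card σ).choose (Fintype.card σ) := by
  rw [restrictTotalDegree, finrank_eq_nat_card_basis (basisRestrictSupport R _),
    Finsupp.natCard_setOf_sum_le]

section Degree

variable {σ R : Type*} [CommRing R] [IsDomain R] {i : σ} {q : MvPolynomial σ R}

theorem MvPolynomial.totalDegree_X_mul (hq : q ≠ 0) :
    (X i * q).totalDegree = q.totalDegree + 1 := by
  rw [totalDegree_mul_of_isDomain (X_ne_zero i) hq, totalDegree_X, add_comm]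

theorem MvPolynomial.X_mul_mem_restrictTotalDegree_zero_iff :
    X i * q ∈ restrictTotalDegree σ R 0 ↔ q = 0 := by
  refine ⟨fun h => ?_, fun h => by simp [h, zero_mem]⟩
  by_contra hq
  rw [mem_restrictTotalDegree, totalDegree_X_mul hq] at h
  omega

theorem MvPolynomial.X_mul_mem_restrictTotalDegree_succ_iff {m : ℕ} :
    X i * q ∈ restrictTotalDegree σ R (m + 1) ↔ q ∈ restrictTotalDegree σ R m := by
  rcases eq_or_ne q 0 with rfl | hq
  · simp [zero_mem]
  rw [mem_restrictTotalDegree, mem_restrictTotalDegree, totalDegree_X_mul hq]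
  omega

theorem MvPolynomial.X_dvd_of_X_mul_eq_X_mul {a b : σ} (hab : a ≠ b) {p r : MvPolynomial σ R}
    (h : X a * p = X b * r) : X a ∣ r :=
  (X_prime.dvd_or_dvd (h ▸ dvd_mul_right _ _)).resolve_left (mt X_dvd_X.mp hab)

end Degree

section Pi

variable {K ι : Type*} [Field K] [Fintype ι] {M : ι → Type*} [∀ i, AddCommGroup (M i)]
  [∀ i, Module K (M i)]

def Submodule.piUnivEquiv (p : ∀ i, Submodule K (M i)) : (∀ i, p i) ≃ₗ[K] pi Set.univ p where
  toFun f := ⟨fun i => f i, fun i _ => (f i).2⟩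
  map_add' _ _ := rfl
  map_smul' _ _ := rfl
  invFun g := fun i => ⟨g.1 i, g.2 i (Set.mem_univ i)⟩
  left_inv _ := rfl
  right_inv _ := rfl

instance (p : ∀ i, Submodule K (M i)) [∀ i, FiniteDimensional K (p i)] :
    FiniteDimensional K (Submodule.pi Set.univ p) :=
  Module.Finite.equiv (Submodule.piUnivEquiv p)

theorem Submodule.finrank_pi_univ (p : ∀ i, Submodule K (M i)) [∀ i, FiniteDimensional K (p i)] :
    finrank K (pi Set.univ p) = ∑ i, finrank K (p i) := by
  rw [← (piUnivEquiv p).finrank_eq, finrank_pi_fintype]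

end Pi

theorem Submodule.finrank_map_add_finrank_inf_ker {K V W : Type*} [Field K] [AddCommGroup V]
    [Module K V] [AddCommGroup W] [Module K W] (f : V →ₗ[K] W) (p : Submodule K V)
    [FiniteDimensional K p] :
    finrank K (p.map f) + finrank K (p ⊓ LinearMap.ker f : Submodule K V) = finrank K p := by
  rw [← (f.domRestrict p).finrank_range_add_finrank_ker, LinearMap.range_domRestrict,
    LinearMap.ker_domRestrict, ← (comapSubtypeEquivOfLe (inf_le_left : p ⊓ _ ≤ p)).finrank_eq,
    comap_inf, comap_subtype_self, top_inf_eq]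

def xmulL : Poly3 →ₗ[ℝ] (Fin 3 → Poly3) :=
  LinearMap.pi fun i => LinearMap.mulLeft ℝ (X i)

theorem xmulL_injective : Function.Injective xmulL := fun _ _ h =>
  mul_left_cancel₀ (X_ne_zero (0 : Fin 3)) (congrFun h 0)

theorem ker_xcrossL : LinearMap.ker xcrossL = LinearMap.range xmulL := by
  ext p
  simp only [LinearMap.mem_ker, LinearMap.mem_range]
  constructor
  · intro hp
    have h1 : X 0 * p 2 = X 2 * p 0 := by
      simpa [xcrossL, sub_eq_zero, eq_comm] using congrFun hp 1
    have h2 : X 0 * p 1 = X 1 * p 0 := by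
      simpa [xcrossL, sub_eq_zero] using congrFun hp 2
    obtain ⟨q, hq⟩ := X_dvd_of_X_mul_eq_X_mul (by decide : (0 : Fin 3) ≠ 1) h2
    have hp1 : p 1 = X 1 * q := mul_left_cancel₀ (X_ne_zero 0) (by rw [h2, hq]; ring)
    have hp2 : p 2 = X 2 * q := mul_left_cancel₀ (X_ne_zero 0) (by rw [h1, hq]; ring)
    refine ⟨q, funext fun i => ?_⟩
    fin_cases i <;> simp [xmulL, hq, hp1, hp2]
  · rintro ⟨q, rfl⟩
    funext i
    simp only [xcrossL, xmulL, LinearMap.pi_apply, LinearMap.sub_apply, LinearMap.comp_apply,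
      LinearMap.proj_apply, LinearMap.mulLeft_apply, Pi.zero_apply]
    ring

theorem comap_xmulL_Vn_zero : (Vn 0).comap xmulL = ⊥ :=
  eq_bot_iff.mpr fun _ hq => X_mul_mem_restrictTotalDegree_zero_iff.mp (hq 0 (Set.mem_univ _))

theorem comap_xmulL_Vn_succ (m : ℕ) :
    (Vn (m + 1)).comap xmulL = restrictTotalDegree (Fin 3) ℝ m := by
  ext q
  simp only [Submodule.mem_comap, Vn, Submodule.mem_pi, Set.mem_univ, true_implies]
  exact ⟨fun h => X_mul_mem_restrictTotalDegree_succ_iff.mp (h 0),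
    fun h _ => X_mul_mem_restrictTotalDegree_succ_iff.mpr h⟩

theorem finrank_comap_xmulL_Vn (n : ℕ) :
    finrank ℝ ((Vn n).comap xmulL) = (n + 2).choose 3 := by
  cases n with
  | zero => rw [comap_xmulL_Vn_zero, finrank_bot]; rfl
  | succ m => rw [comap_xmulL_Vn_succ, finrank_restrictTotalDegree, Fintype.card_fin]

instance (n : ℕ) : FiniteDimensional ℝ (Vn n) := by
  unfold Vn
  infer_instance

theorem finrank_Vn (n : ℕ) : finrank ℝ (Vn n) = 3 * (n + 3).choose 3 := by
  rw [Vn, Submodule.finrank_pi_univ]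
  simp [finrank_restrictTotalDegree]

theorem choose_three_third_difference (n : ℕ) :
    3 * (n + 3).choose 3 + (n + 5).choose 3 = 3 * (n + 4).choose 3 + 1 + (n + 2).choose 3 := by
  simp only [Nat.choose_succ_succ', Nat.choose_one_right, Nat.choose_zero_right]
  omega

/-- The dimension of `x ∧ [P_n(ℝ³)]³` equals `3·π_{n+1,3} - π_{n+2,3} + 1`,
where `π_{m,3} = dim P_m(ℝ³) = binom(m+3,3)`. -/
theorem dim_xcross_polys (n : ℕ) :
    (Module.finrank ℝ ↥(Submodule.map xcrossL (Vn n)) : ℤ)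
      = 3 * Nat.choose (n + 1 + 3) 3 - Nat.choose (n + 2 + 3) 3 + 1 := by
  have hker : finrank ℝ (Vn n ⊓ LinearMap.ker xcrossL : Submodule ℝ _) = (n + 2).choose 3 := by
    rw [ker_xcrossL, inf_comm, ← Submodule.map_comap_eq,
      ← (Submodule.equivMapOfInjective _ xmulL_injective _).finrank_eq, finrank_comap_xmulL_Vn]
  have hrank := (Vn n).finrank_map_add_finrank_inf_ker xcrossL
  rw [hker, finrank_Vn] at hrank
  have := choose_three_third_difference n
  simp only [Nat.add_assoc, Nat.reduceAdd]
  omega
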